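/- Let α ∈ (0,1) and z > 0 satisfy Φ̄(z) = α/2, and define g(ω) = z/√ω + (2/α)·( φ(z/√ω) − (z/√ω)·Φ̄(z/√ω) ) for ω > 0. Then g is strictly decreasing on (0,1] and strictly increasing on [1,∞); consequently, for any constants c ≥ 0 and d > 0, the expected-score function R(ω) = c + d·g(ω) attains its minimum over (0,∞) uniquely at ω = 1. In particular, in the correctly specified Gaussian model Y_i ~ N(μ,σ²) with known σ² and flat prior on μ, the expected score R_n(ω) = σ²/n + (2σ/√n)·g(ω) of the generalized posterior is uniquely minimized at learning rate ω = 1. -/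

import Mathlib

/-!
Write `u = z / √ω`, so that `g z α ω = h(u)` with `h(u) = u + (2/α)(φ(u) − u Φ̄(u))`. Since
`φ' = −u φ`, the derivative is `h'(u) = 1 − (2/α) Φ̄(u)`, which is strictly increasing and vanishes
exactly at the quantile `u = z`. Hence `h` decreases on `(−∞, z]` and increases on `[z, ∞)`, and
as `ω ↦ z / √ω` is strictly decreasing with value `z` at `ω = 1`, `g` decreases on `(0, 1]` and
increases on `[1, ∞)`.
-/

open MeasureTheory ProbabilityTheory Set

/-- The standard normal density `φ(t) = (2π)^{-1/2} exp(-t²/2)`. -/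
noncomputable def phi (t : ℝ) : ℝ := (Real.sqrt (2 * Real.pi))⁻¹ * Real.exp (-t ^ 2 / 2)

/-- The standard normal cumulative distribution function `Φ`. -/
noncomputable def Phi (t : ℝ) : ℝ := ((gaussianReal 0 1) (Iic t)).toReal

/-- The expected-interval-score factor `g(ω) = z/√ω + (2/α)(φ(z/√ω) − (z/√ω) Φ̄(z/√ω))`. -/
noncomputable def g (z α ω : ℝ) : ℝ :=
  z / Real.sqrt ω
    + (2 / α) * (phi (z / Real.sqrt ω) - (z / Real.sqrt ω) * (1 - Phi (z / Real.sqrt ω)))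

lemma phi_eq_gaussianPDFReal : phi = gaussianPDFReal 0 1 := by
  ext x
  simp [phi, gaussianPDFReal]

lemma integrable_phi : Integrable phi :=
  phi_eq_gaussianPDFReal ▸ integrable_gaussianPDFReal 0 1

lemma continuous_phi : Continuous phi := by
  unfold phi
  fun_prop

lemma phi_pos (t : ℝ) : 0 < phi t :=
  phi_eq_gaussianPDFReal ▸ gaussianPDFReal_pos 0 1 t one_ne_zero

lemma hasDerivAt_phi (u : ℝ) : HasDerivAt phi (-u * phi u) u := by
  have hexp : HasDerivAt (fun t : ℝ => Real.exp (-t ^ 2 / 2)) (Real.exp (-u ^ 2 / 2) * -u) u :=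
    (((hasDerivAt_pow 2 u).neg.div_const 2).congr_deriv (by push_cast; ring)).exp
  exact (hexp.const_mul _).congr_deriv (by simp only [phi]; ring)

lemma Phi_eq_integral (t : ℝ) : Phi t = ∫ x in Iic t, phi x := by
  rw [Phi, gaussianReal_apply_eq_integral 0 one_ne_zero, ENNReal.toReal_ofReal,
    phi_eq_gaussianPDFReal]
  exact setIntegral_nonneg measurableSet_Iic fun x _ => gaussianPDFReal_nonneg 0 1 x

lemma Phi_sub_Phi (a b : ℝ) : Phi b - Phi a = ∫ x in a..b, phi x := by
  rw [Phi_eq_integral, Phi_eq_integral,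
    intervalIntegral.integral_Iic_sub_Iic integrable_phi.integrableOn integrable_phi.integrableOn]

lemma hasDerivAt_Phi (t : ℝ) : HasDerivAt Phi (phi t) t := by
  have hFTC := (intervalIntegral.integral_hasDerivAt_right
    (integrable_phi.intervalIntegrable (a := 0) (b := t))
    (continuous_phi.stronglyMeasurableAtFilter _ _) continuous_phi.continuousAt).const_add (Phi 0)
  refine hFTC.congr_of_eventuallyEq (Filter.Eventually.of_forall fun s => ?_)
  simp only [← Phi_sub_Phi, add_sub_cancel]

lemma strictMono_Phi : StrictMono Phi := fun a b hab => by
  have hpos : 0 < ∫ x in a..b, phi x :=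
    intervalIntegral.intervalIntegral_pos_of_pos_on integrable_phi.intervalIntegrable
      (fun x _ => phi_pos x) hab
  linarith [Phi_sub_Phi a b]

section DerivStrictMono

variable {f f' : ℝ → ℝ} {z : ℝ}

lemma strictAntiOn_Iic_of_hasDerivAt_of_strictMono (hf : ∀ u, HasDerivAt f (f' u) u)
    (hf' : StrictMono f') (hz : f' z = 0) : StrictAntiOn f (Iic z) := by
  refine strictAntiOn_of_hasDerivWithinAt_neg (convex_Iic z)
    (fun u _ => (hf u).continuousAt.continuousWithinAt) (fun u _ => (hf u).hasDerivWithinAt)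
    fun u hu => ?_
  rw [interior_Iic] at hu
  exact hz ▸ hf' hu

lemma strictMonoOn_Ici_of_hasDerivAt_of_strictMono (hf : ∀ u, HasDerivAt f (f' u) u)
    (hf' : StrictMono f') (hz : f' z = 0) : StrictMonoOn f (Ici z) := by
  refine strictMonoOn_of_hasDerivWithinAt_pos (convex_Ici z)
    (fun u _ => (hf u).continuousAt.continuousWithinAt) (fun u _ => (hf u).hasDerivWithinAt)
    fun u hu => ?_
  rw [interior_Ici] at hu
  exact hz ▸ hf' hu

end DerivStrictMono

noncomputable def scoreFactor (α u : ℝ) : ℝ := u + (2 / α) * (phi u - u * (1 - Phi u))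

lemma g_eq_scoreFactor (z α ω : ℝ) : g z α ω = scoreFactor α (z / Real.sqrt ω) := rfl

lemma hasDerivAt_scoreFactor (α u : ℝ) :
    HasDerivAt (scoreFactor α) (1 - (2 / α) * (1 - Phi u)) u := by
  have hprod : HasDerivAt (fun u : ℝ => u * (1 - Phi u)) (1 * (1 - Phi u) + u * (0 - phi u)) u :=
    (hasDerivAt_id u).mul ((hasDerivAt_const u 1).sub (hasDerivAt_Phi u))
  exact ((hasDerivAt_id u).add (((hasDerivAt_phi u).sub hprod).const_mul (2 / α))).congr_deriv
    (by ring)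

section Quantile

variable {α z : ℝ}

lemma strictMono_deriv_scoreFactor (hα : 0 < α) :
    StrictMono fun u => 1 - (2 / α) * (1 - Phi u) := fun a b hab => by
  have := strictMono_Phi hab
  have : 0 < 2 / α := by positivity
  nlinarith

lemma deriv_scoreFactor_quantile (hα : 0 < α) (hzα : 1 - Phi z = α / 2) :
    1 - (2 / α) * (1 - Phi z) = 0 := by
  rw [hzα]
  field_simp
  ring

lemma scoreFactor_strictAntiOn_Iic (hα : 0 < α) (hzα : 1 - Phi z = α / 2) :
    StrictAntiOn (scoreFactor α) (Iic z) :=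
  strictAntiOn_Iic_of_hasDerivAt_of_strictMono (hasDerivAt_scoreFactor α)
    (strictMono_deriv_scoreFactor hα) (deriv_scoreFactor_quantile hα hzα)

lemma scoreFactor_strictMonoOn_Ici (hα : 0 < α) (hzα : 1 - Phi z = α / 2) :
    StrictMonoOn (scoreFactor α) (Ici z) :=
  strictMonoOn_Ici_of_hasDerivAt_of_strictMono (hasDerivAt_scoreFactor α)
    (strictMono_deriv_scoreFactor hα) (deriv_scoreFactor_quantile hα hzα)

lemma strictAntiOn_div_sqrt (hz : 0 < z) : StrictAntiOn (fun ω => z / Real.sqrt ω) (Ioi 0) :=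
  fun _ hx _ _ hxy =>
    div_lt_div_of_pos_left hz (Real.sqrt_pos.mpr hx) (Real.sqrt_lt_sqrt (le_of_lt hx) hxy)

lemma g_strictAntiOn_Ioc (hα : 0 < α) (hz : 0 < z) (hzα : 1 - Phi z = α / 2) :
    StrictAntiOn (g z α) (Ioc 0 1) := by
  refine (scoreFactor_strictMonoOn_Ici hα hzα).comp_strictAntiOn
    ((strictAntiOn_div_sqrt hz).mono Ioc_subset_Ioi_self) fun ω hω => ?_
  exact (le_div_iff₀ (Real.sqrt_pos.mpr hω.1)).mpr
    (mul_le_of_le_one_right hz.le (Real.sqrt_le_one.mpr hω.2))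

lemma g_strictMonoOn_Ici (hα : 0 < α) (hz : 0 < z) (hzα : 1 - Phi z = α / 2) :
    StrictMonoOn (g z α) (Ici 1) :=
  (scoreFactor_strictAntiOn_Iic hα hzα).comp
    ((strictAntiOn_div_sqrt hz).mono fun _ hω => mem_Ioi.mpr (zero_lt_one.trans_le hω))
    fun _ hω => div_le_self hz.le (Real.one_le_sqrt.mpr hω)

lemma g_one_lt (hα : 0 < α) (hz : 0 < z) (hzα : 1 - Phi z = α / 2) {ω : ℝ} (hω : 0 < ω)
    (hω1 : ω ≠ 1) : g z α 1 < g z α ω := by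
  rcases hω1.lt_or_gt with h | h
  · exact g_strictAntiOn_Ioc hα hz hzα ⟨hω, h.le⟩ ⟨one_pos, le_rfl⟩ h
  · exact g_strictMonoOn_Ici hα hz hzα (mem_Ici.mpr le_rfl) h.le h

end Quantile

/-- If `Φ̄(z) = α/2`, then `g` is strictly decreasing on `(0,1]` and strictly increasing on
`[1,∞)`; consequently for any `c ≥ 0` and `d > 0` the expected-score function
`R(ω) = c + d g(ω)` attains its minimum over `(0,∞)` uniquely at `ω = 1`.  In particular,
in the correctly specified Gaussian model with known variance `σ²` and flat prior, the
expected score `R_n(ω) = σ²/n + (2σ/√n) g(ω)` is uniquely minimized at `ω = 1`. -/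
theorem stmt13 (α z : ℝ) (hα : α ∈ Ioo (0 : ℝ) 1) (hz : 0 < z)
    (hzα : 1 - Phi z = α / 2) :
    StrictAntiOn (g z α) (Ioc (0 : ℝ) 1)
      ∧ StrictMonoOn (g z α) (Ici (1 : ℝ))
      ∧ (∀ c : ℝ, 0 ≤ c → ∀ d : ℝ, 0 < d → ∀ ω : ℝ, 0 < ω → ω ≠ 1 →
          c + d * g z α 1 < c + d * g z α ω)
      ∧ (∀ σ : ℝ, 0 < σ → ∀ n : ℕ, 1 ≤ n → ∀ ω : ℝ, 0 < ω → ω ≠ 1 →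
          σ ^ 2 / n + (2 * σ / Real.sqrt n) * g z α 1
            < σ ^ 2 / n + (2 * σ / Real.sqrt n) * g z α ω) := by
  have hα0 := hα.1
  refine ⟨g_strictAntiOn_Ioc hα0 hz hzα, g_strictMonoOn_Ici hα0 hz hzα, ?_, ?_⟩
  · intro c _ d hd ω hω hω1
    exact (add_lt_add_iff_left c).mpr (mul_lt_mul_of_pos_left (g_one_lt hα0 hz hzα hω hω1) hd)
  · intro σ hσ n hn ω hω hω1
    have hn0 : (0 : ℝ) < n := by exact_mod_cast hn
    have hd : 0 < 2 * σ / Real.sqrt n := by positivity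
    exact (add_lt_add_iff_left _).mpr (mul_lt_mul_of_pos_left (g_one_lt hα0 hz hzα hω hω1) hd)
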